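/- Let n ≥ 4. Consider n random lengths drawn independently and uniformly from [0,1], with increasing rearrangement X_(1) ≤ ⋯ ≤ X_(n). Then the probability that X_(i) + ⋯ + X_(i+n−3) < X_(i+n−2) for both i = 1 and i = 2 (i.e., that no (n−1)-gon can be formed) equals 1 / ( (2n−5) · 2^{n−3} · (n−3)! ). -/

import Mathlib

/-!
Both the event and the unit cube are invariant under permutations of the coordinates, and ties
are null, so each has `n!` times the volume of its part in the chamber `x₀ < x₁ < ⋯ < x_{n-1}`.
Write `n = m + 3`. On that chamber the event is the preimage of the chamber part of the cube under
the lower-triangular linear map `y = gapMatrix m *ᵥ x`, which is built so that `y₀ = (2m+1) x₀`,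
`y_{r+1} - y_r = 2 (m - r) (x_{r+1} - x_r)` for `r < m`, the last two increments of `y` are the
two polygon slacks, and `y_{m+2} = x_{m+2}`. Its determinant is `(2m+1) · 2^m · m!`, hence the
probability is the reciprocal of that number.
-/

open MeasureTheory Finset ENNReal

/-- `T k ℓ` : the `(k-1)`-bonacci sequence with initial terms
`T k ℓ 1 = ⋯ = T k ℓ (ℓ-1) = 0`, `T k ℓ ℓ = ⋯ = T k ℓ (k-1) = 1` and
recurrence `T k ℓ m = ∑_{p=1}^{k-1} T k ℓ (m-p)` for `m ≥ k`. -/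
def T (k ℓ : ℕ) : ℕ → ℕ
  | m =>
    if m < k then (if ℓ ≤ m then 1 else 0)
    else if h0 : m = 0 then 0
    else ∑ p ∈ (Finset.range (k - 1)).attach, T k ℓ (m - (↑p + 1))
  termination_by m => m
  decreasing_by omega

/-- `S k` : the `(k-1)`-bonacci sequence with `S k 1 = 1`, `S k i = 2^(i-2)` for
`2 ≤ i ≤ k-1`, and recurrence `S k m = ∑_{p=1}^{k-1} S k (m-p)` for `m ≥ k`. -/
def S (k : ℕ) : ℕ → ℕ
  | m =>
    if h0 : m = 0 then 0
    else if m = 1 then 1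
    else if m < k then 2 ^ (m - 2)
    else ∑ p ∈ (Finset.range (k - 1)).attach, S k (m - (↑p + 1))
  termination_by m => m
  decreasing_by omega

/-- No `k`-gon can be formed from the (increasingly sorted) stick lengths `y`:
for every window of `k` consecutive entries, i.e. every (0-indexed) `i` with
`i + (k-1) < n`, one has `y i + ⋯ + y (i+k-2) < y (i+k-1)`. -/
def NoPolygon (n k : ℕ) (y : Fin n → ℝ) : Prop :=
  ∀ i : ℕ, ∀ hi : i + (k - 1) < n,
    (∑ j : Fin (k - 1), y ⟨i + j, by have := j.isLt; omega⟩) < y ⟨i + (k - 1), hi⟩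

open Matrix

theorem volume_setOf_apply_eq_apply {ι : Type*} [Fintype ι] {i j : ι} (hij : i ≠ j) :
    volume {x : ι → ℝ | x i = x j} = 0 := by
  classical
  let f : (ι → ℝ) →ₗ[ℝ] ℝ := LinearMap.proj (R := ℝ) (φ := fun _ : ι => ℝ) i - LinearMap.proj j
  have hker : {x : ι → ℝ | x i = x j} = LinearMap.ker f := by
    ext x; simp [f, sub_eq_zero]
  rw [hker]
  refine Measure.addHaar_submodule _ _ fun htop => ?_
  have h : (Pi.single i 1 : ι → ℝ) ∈ LinearMap.ker f := htop ▸ Submodule.mem_top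
  simp [f, hij.symm] at h

theorem volume_setOf_not_injective {ι : Type*} [Fintype ι] :
    volume {x : ι → ℝ | ¬ Function.Injective x} = 0 := by
  have h : {x : ι → ℝ | ¬ Function.Injective x} = ⋃ i, ⋃ j, ⋃ (_ : i ≠ j), {x | x i = x j} := by
    ext x; simp [Function.Injective, and_comm]
  rw [h]
  exact measure_iUnion_null fun i => measure_iUnion_null fun j =>
    measure_iUnion_null fun hij => volume_setOf_apply_eq_apply hij

theorem measurePreserving_comp_perm {ι : Type*} [Fintype ι] (σ : Equiv.Perm ι) :
    MeasurePreserving (fun x : ι → ℝ => x ∘ σ) :=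
  volume_preserving_arrowCongr' σ.symm (MeasurableEquiv.refl ℝ) (.id _)

theorem measurableSet_setOf_strictMono {n : ℕ} :
    MeasurableSet {x : Fin n → ℝ | StrictMono x} := by
  have h : {x : Fin n → ℝ | StrictMono x} = ⋂ i, ⋂ j, ⋂ (_ : i < j), {x | x i < x j} := by
    ext x; simp [StrictMono]
  rw [h]
  exact .iInter fun i => .iInter fun j => .iInter fun _ =>
    measurableSet_lt (measurable_pi_apply i) (measurable_pi_apply j)

theorem measurableSet_setOf_forall_mem_inter_strictMono {n : ℕ} {s : Set ℝ}
    (hs : MeasurableSet s) :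
    MeasurableSet ({x : Fin n → ℝ | ∀ i, x i ∈ s} ∩ {x | StrictMono x}) := by
  rw [show {x : Fin n → ℝ | ∀ i, x i ∈ s} = Set.univ.pi fun _ => s from
    Set.ext fun _ => Set.mem_univ_pi.symm]
  exact (MeasurableSet.univ_pi fun _ => hs).inter measurableSet_setOf_strictMono

theorem volume_setOf_forall_mem_Icc_zero_one {ι : Type*} [Fintype ι] :
    volume {x : ι → ℝ | ∀ i, x i ∈ Set.Icc (0 : ℝ) 1} = 1 := by
  rw [show {x : ι → ℝ | ∀ i, x i ∈ Set.Icc (0 : ℝ) 1} = Set.univ.pi fun _ => Set.Icc 0 1 from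
    Set.ext fun _ => Set.mem_univ_pi.symm, volume_pi_pi]
  simp

theorem comp_perm_preimage_setOf_forall_mem {ι α : Type*} (s : Set α) (σ : Equiv.Perm ι) :
    (fun x : ι → α => x ∘ σ) ⁻¹' {x | ∀ i, x i ∈ s} = {x | ∀ i, x i ∈ s} :=
  Set.ext fun x => σ.forall_congr_right (q := fun i => x i ∈ s)

theorem comp_perm_preimage_setOf_sort {n : ℕ} {α : Type*} [LinearOrder α] (s : Set α)
    (P : (Fin n → α) → Prop) (σ : Equiv.Perm (Fin n)) :
    (fun x : Fin n → α => x ∘ σ) ⁻¹' {x | (∀ i, x i ∈ s) ∧ P (x ∘ Tuple.sort x)} =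
      {x | (∀ i, x i ∈ s) ∧ P (x ∘ Tuple.sort x)} := by
  ext x
  change (∀ i, x (σ i) ∈ s) ∧ P ((x ∘ σ) ∘ Tuple.sort (x ∘ σ)) ↔ _
  rw [Tuple.comp_perm_comp_sort_eq_comp_sort, σ.forall_congr_right (q := fun i => x i ∈ s)]
  exact Iff.rfl

theorem setOf_sort_inter_strictMono {n : ℕ} {α : Type*} [LinearOrder α] (s : Set α)
    (P : (Fin n → α) → Prop) :
    {x : Fin n → α | (∀ i, x i ∈ s) ∧ P (x ∘ Tuple.sort x)} ∩ {x | StrictMono x} =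
      {x | (∀ i, x i ∈ s) ∧ StrictMono x ∧ P x} := by
  ext x
  refine ⟨fun ⟨⟨hx, hP⟩, hxs⟩ => ⟨hx, hxs, ?_⟩, fun ⟨hx, hxs, hP⟩ => ⟨⟨hx, ?_⟩, hxs⟩⟩
  · rwa [Tuple.sort_eq_refl_iff_monotone.2 hxs.monotone] at hP
  · rwa [Tuple.sort_eq_refl_iff_monotone.2 hxs.monotone]

theorem volume_eq_factorial_mul_volume_inter_strictMono {n : ℕ} {A : Set (Fin n → ℝ)}
    (hA : ∀ σ : Equiv.Perm (Fin n), (fun x => x ∘ σ) ⁻¹' A = A)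
    (hAm : MeasurableSet (A ∩ {x | StrictMono x})) :
    volume A = n.factorial * volume (A ∩ {x | StrictMono x}) := by
  set B := A ∩ {x : Fin n → ℝ | StrictMono x}
  have hpre (σ : Equiv.Perm (Fin n)) :
      (fun x => x ∘ σ) ⁻¹' B = A ∩ {x | StrictMono (x ∘ σ)} := by
    rw [Set.preimage_inter, hA]; rfl
  have hdisj :
      Pairwise (Function.onFun Disjoint fun σ : Equiv.Perm (Fin n) => (fun x => x ∘ σ) ⁻¹' B) := by
    intro σ τ hστ
    rw [Function.onFun, hpre, hpre, Set.disjoint_left]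
    rintro x ⟨-, hσ⟩ ⟨-, hτ⟩
    have hx : Function.Injective x := hσ.injective.of_comp_right σ.surjective
    exact hστ (Equiv.ext fun i => hx (congrFun (Tuple.unique_monotone hσ.monotone hτ.monotone) i))
  have hcover :
      A \ {x | ¬ Function.Injective x} ⊆ ⋃ σ : Equiv.Perm (Fin n), (fun x => x ∘ σ) ⁻¹' B := by
    rintro x ⟨hxA, hx⟩
    refine Set.mem_iUnion.2 ⟨Tuple.sort x, ?_⟩
    rw [hpre]
    exact ⟨hxA, (Tuple.monotone_sort x).strictMono_of_injective
      ((not_not.1 hx).comp (Tuple.sort x).injective)⟩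
  have hunion : volume A = volume (⋃ σ : Equiv.Perm (Fin n), (fun x => x ∘ σ) ⁻¹' B) := by
    refine le_antisymm ?_ (measure_mono (Set.iUnion_subset fun σ => ?_))
    · rw [← measure_sdiff_null (volume_setOf_not_injective (ι := Fin n))]
      exact measure_mono hcover
    · rw [hpre]; exact Set.inter_subset_left
  rw [hunion, measure_iUnion hdisj fun σ => (measurePreserving_comp_perm σ).measurable hAm,
    tsum_fintype]
  simp_rw [(measurePreserving_comp_perm _).measure_preimage hAm.nullMeasurableSet]
  simp [Fintype.card_perm]

theorem Monotone.forall_mem_Icc_iff {ι α : Type*} [Preorder ι] [OrderBot ι] [OrderTop ι]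
    [Preorder α] {f : ι → α} (hf : Monotone f) {a b : α} :
    (∀ i, f i ∈ Set.Icc a b) ↔ a ≤ f ⊥ ∧ f ⊤ ≤ b :=
  ⟨fun h => ⟨(h ⊥).1, (h ⊤).2⟩,
    fun h i => ⟨h.1.trans (hf (bot_le : ⊥ ≤ i)), (hf (le_top : i ≤ ⊤)).trans h.2⟩⟩

theorem Matrix.mulVec_apply_sub_mulVec_apply {ι R : Type*} [Fintype ι] [Ring R]
    (M : Matrix ι ι R) (x : ι → R) (a b : ι) :
    (M *ᵥ x) a - (M *ᵥ x) b = ∑ j, (M a j - M b j) * x j := by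
  simp only [Matrix.mulVec, dotProduct, ← Finset.sum_sub_distrib, sub_mul]

theorem Fin.sum_window_eq_sum_ite {M : Type*} [AddCommMonoid M] {N : ℕ} (x : Fin N → M)
    (k l : ℕ) (h : k + l ≤ N) :
    ∑ j : Fin l, x ⟨k + j, by omega⟩ =
      ∑ j : Fin N, if k ≤ (j : ℕ) ∧ (j : ℕ) < k + l then x j else 0 := by
  rw [← Finset.sum_filter]
  refine Finset.sum_nbij (fun j => ⟨k + j, by omega⟩) (fun j _ => by simp)
    (fun a _ b _ hab => by simpa [Fin.ext_iff] using hab) (fun j hj => ?_) fun _ _ => rfl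
  obtain ⟨-, hkj, hjl⟩ := Finset.mem_filter.1 hj
  exact ⟨⟨j - k, by omega⟩, by simp, by ext; dsimp only; omega⟩

theorem Fin.prod_natCast_sub_eq_factorial {R : Type*} [CommRing R] (m : ℕ) :
    ∏ i : Fin m, ((m : R) - i) = m.factorial := by
  rw [← Equiv.prod_comp Fin.revPerm]
  have h (i : Fin m) : (m : R) - (Fin.revPerm i : Fin m) = (i : ℕ) + 1 := by
    rw [Fin.revPerm_apply, Fin.val_rev, Nat.cast_sub (by omega)]; push_cast; ring
  simp_rw [h]
  rw [Fin.prod_univ_eq_prod_range (fun i => (i : R) + 1), ← Finset.prod_range_add_one_eq_factorial]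
  push_cast
  rfl

theorem noPolygon_add_three_add_two_iff {m : ℕ} (x : Fin (m + 3) → ℝ) :
    NoPolygon (m + 3) (m + 2) x ↔
      ∀ i : Fin (m + 2), m ≤ (i : ℕ) → ∑ j : Fin (m + 1), x ⟨i - m + j, by omega⟩ < x i.succ := by
  constructor
  · intro h i hi
    convert h (i - m) (by omega) using 2
    ext
    simp only [Fin.val_succ]
    omega
  · intro h k hk
    convert h ⟨k + m, by omega⟩ (by simp) using 3 <;> simp [Nat.add_assoc]

theorem strictMono_of_lt_succ_of_sum_lt {m : ℕ} {x : Fin (m + 3) → ℝ} (hx : 0 ≤ x 0)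
    (hgap : ∀ i : Fin (m + 2), (i : ℕ) < m → x i.castSucc < x i.succ)
    (hpoly : ∀ i : Fin (m + 2), m ≤ (i : ℕ) →
      ∑ j : Fin (m + 1), x ⟨i - m + j, by omega⟩ < x i.succ) :
    StrictMono x := by
  have hnonneg_le (j : ℕ) (hj : j ≤ m) : 0 ≤ x ⟨j, by omega⟩ := by
    induction j with
    | zero => exact hx
    | succ j ih => exact (ih (by omega)).trans (hgap ⟨j, by omega⟩ hj).le
  have hnonneg (j : ℕ) (hj : j ≤ m + 1) : 0 ≤ x ⟨j, by omega⟩ := by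
    obtain hj | rfl := hj.lt_or_eq
    · exact hnonneg_le j (by omega)
    · have h := hpoly ⟨m, by omega⟩ le_rfl
      simp only [Nat.sub_self, zero_add] at h
      exact (Finset.sum_nonneg fun (j : Fin (m + 1)) _ => hnonneg_le j j.is_le).trans h.le
  refine Fin.strictMono_iff_lt_succ.2 fun i => ?_
  by_cases hi : (i : ℕ) < m
  · exact hgap i hi
  -- `x i` is the last entry of the window, all of whose entries are nonnegative
  have hlast : x i.castSucc = x ⟨i - m + (Fin.last m : ℕ), by omega⟩ :=
    congrArg x (Fin.ext (by simp only [Fin.val_castSucc, Fin.val_last]; omega))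
  calc x i.castSucc ≤ ∑ j : Fin (m + 1), x ⟨i - m + j, by omega⟩ := by
        rw [hlast]
        exact Finset.single_le_sum (f := fun j : Fin (m + 1) => x ⟨i - m + j, by omega⟩)
          (fun j _ => hnonneg _ (by omega)) (Finset.mem_univ _)
    _ < x i.succ := hpoly i (by omega)

/-- Row `r ≤ m` of `gapMatrix m *ᵥ x` is `2 ((m + 1 - r) x_r + ∑_{j<r} x_j) - x_0`, row `m + 1` is
`x_1 + ⋯ + x_{m+1}` and row `m + 2` is `x_{m+2}`. -/
def gapMatrix (m : ℕ) : Matrix (Fin (m + 3)) (Fin (m + 3)) ℝ :=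
  Matrix.of fun i j =>
    if (i : ℕ) ≤ m then
      (if j < i then 2 else if j = i then 2 * ((m : ℝ) + 1 - i) else 0) - if j = 0 then 1 else 0
    else if (i : ℕ) = m + 1 then (if j ≠ 0 ∧ j ≤ i then 1 else 0)
    else if j = i then 1 else 0

namespace gapMatrix

variable {m : ℕ}

theorem isLowerTriangular : (gapMatrix m).IsLowerTriangular := by
  intro i j hij
  have hij : (i : ℕ) < j := hij
  simp only [gapMatrix, Matrix.of_apply, Fin.lt_def, Fin.ext_iff, Fin.le_def, Fin.val_zero]
  split_ifs <;> first | rfl | omega | simp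

theorem apply_zero_zero : gapMatrix m 0 0 = 2 * m + 1 := by
  simp only [gapMatrix, of_apply, Fin.val_zero, zero_le, ↓reduceIte, lt_self_iff_false,
    Nat.cast_zero, sub_zero]
  ring

theorem det : (gapMatrix m).det = (2 * m + 1) * 2 ^ m * m.factorial := by
  have hmid (i : Fin m) :
      gapMatrix m i.succ.castSucc.castSucc i.succ.castSucc.castSucc = 2 * (m - i) := by
    simp [gapMatrix, Nat.succ_le_of_lt i.isLt]
  have hm1 : gapMatrix m (Fin.last (m + 1)).castSucc (Fin.last (m + 1)).castSucc = 1 := by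
    simp [gapMatrix]
  have hm2 : gapMatrix m (Fin.last (m + 2)) (Fin.last (m + 2)) = 1 := by simp [gapMatrix]
  rw [Matrix.det_of_isLowerTriangular _ isLowerTriangular, Fin.prod_univ_castSucc,
    Fin.prod_univ_castSucc, Fin.prod_univ_succ, Fin.castSucc_zero, Fin.castSucc_zero,
    apply_zero_zero, hm1, hm2]
  simp_rw [hmid]
  rw [Finset.prod_mul_distrib, Finset.prod_const, Finset.card_univ, Fintype.card_fin,
    Fin.prod_natCast_sub_eq_factorial]
  ring

theorem mulVec_zero (x : Fin (m + 3) → ℝ) : (gapMatrix m *ᵥ x) 0 = (2 * m + 1) * x 0 := by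
  rw [mulVec, dotProduct, Fintype.sum_eq_single 0 fun j hj => ?_, apply_zero_zero]
  rw [isLowerTriangular (show OrderDual.toDual j < OrderDual.toDual 0 from Fin.pos_iff_ne_zero.2 hj),
    zero_mul]

theorem mulVec_last (x : Fin (m + 3) → ℝ) : (gapMatrix m *ᵥ x) (Fin.last _) = x (Fin.last _) := by
  rw [mulVec, dotProduct, Fintype.sum_eq_single (Fin.last _) fun j hj => ?_]
  · simp [gapMatrix]
  · simp [gapMatrix, hj]

theorem mulVec_succ_sub_of_lt (x : Fin (m + 3) → ℝ) (i : Fin (m + 2)) (hi : (i : ℕ) < m) :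
    (gapMatrix m *ᵥ x) i.succ - (gapMatrix m *ᵥ x) i.castSucc =
      2 * (m - i) * (x i.succ - x i.castSucc) := by
  rw [Matrix.mulVec_apply_sub_mulVec_apply,
    Fintype.sum_eq_add i.succ i.castSucc (Fin.castSucc_lt_succ (i := i)).ne']
  · simp only [gapMatrix, of_apply, Fin.lt_def, Fin.ext_iff, Fin.le_def, Fin.val_succ,
      Fin.val_castSucc, Fin.val_zero]
    split_ifs <;> first | omega | (push_cast; ring)
  · intro j hj
    refine mul_eq_zero_of_left ?_ _
    simp only [gapMatrix, of_apply, Fin.lt_def, Fin.ext_iff, Fin.le_def, Fin.val_succ,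
      Fin.val_castSucc, Fin.val_zero, ne_eq] at hj ⊢
    split_ifs <;> first | omega | ring

theorem mulVec_succ_sub_of_le (x : Fin (m + 3) → ℝ) (i : Fin (m + 2)) (hi : m ≤ (i : ℕ)) :
    (gapMatrix m *ᵥ x) i.succ - (gapMatrix m *ᵥ x) i.castSucc =
      x i.succ - ∑ j : Fin (m + 1), x ⟨i - m + j, by omega⟩ := by
  rw [Matrix.mulVec_apply_sub_mulVec_apply, Fin.sum_window_eq_sum_ite x (i - m) (m + 1) (by omega),
    ← Fintype.sum_ite_eq' i.succ x, ← Finset.sum_sub_distrib]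
  refine Finset.sum_congr rfl fun j _ => ?_
  obtain hi | hi : (i : ℕ) = m ∨ (i : ℕ) = m + 1 := by omega
  all_goals
    simp only [gapMatrix, of_apply, Fin.lt_def, Fin.ext_iff, Fin.le_def, Fin.val_zero, Fin.val_succ,
      Fin.val_castSucc, ne_eq, hi]
    split_ifs <;> first | omega | ring

theorem strictMono_mulVec_iff {x : Fin (m + 3) → ℝ} (hx : 0 ≤ x 0) :
    StrictMono (gapMatrix m *ᵥ x) ↔ StrictMono x ∧ NoPolygon (m + 3) (m + 2) x := by
  rw [Fin.strictMono_iff_lt_succ (f := gapMatrix m *ᵥ x), noPolygon_add_three_add_two_iff]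
  have hcoeff (i : Fin (m + 2)) (hi : (i : ℕ) < m) : (0 : ℝ) < 2 * (m - i) := by
    have : (i : ℝ) < m := by exact_mod_cast hi
    linarith
  constructor
  · intro hy
    have hpoly (i : Fin (m + 2)) (hi : m ≤ (i : ℕ)) :
        ∑ j : Fin (m + 1), x ⟨i - m + j, by omega⟩ < x i.succ := by
      have h := sub_pos.2 (hy i)
      rwa [mulVec_succ_sub_of_le x i hi, sub_pos] at h
    refine ⟨strictMono_of_lt_succ_of_sum_lt hx (fun i hi => ?_) hpoly, hpoly⟩
    have h := sub_pos.2 (hy i)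
    rw [mulVec_succ_sub_of_lt x i hi] at h
    exact sub_pos.1 (pos_of_mul_pos_right h (hcoeff i hi).le)
  · rintro ⟨hxs, hpoly⟩ i
    rw [← sub_pos]
    by_cases hi : (i : ℕ) < m
    · rw [mulVec_succ_sub_of_lt x i hi]
      exact mul_pos (hcoeff i hi) (sub_pos.2 (hxs Fin.castSucc_lt_succ))
    · rw [mulVec_succ_sub_of_le x i (by omega), sub_pos]
      exact hpoly i (by omega)

theorem mulVec_mem_iff (x : Fin (m + 3) → ℝ) :
    ((∀ i, (gapMatrix m *ᵥ x) i ∈ Set.Icc (0 : ℝ) 1) ∧ StrictMono (gapMatrix m *ᵥ x)) ↔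
      (∀ i, x i ∈ Set.Icc (0 : ℝ) 1) ∧ StrictMono x ∧ NoPolygon (m + 3) (m + 2) x := by
  have hcoeff : (0 : ℝ) < 2 * m + 1 := by positivity
  constructor
  · rintro ⟨hy, hys⟩
    have hx0 : 0 ≤ x 0 := by
      have h := (hy 0).1
      rw [mulVec_zero] at h
      exact nonneg_of_mul_nonneg_right h hcoeff
    obtain ⟨hxs, hpoly⟩ := (strictMono_mulVec_iff hx0).1 hys
    refine ⟨hxs.monotone.forall_mem_Icc_iff.2 ⟨hx0, ?_⟩, hxs, hpoly⟩
    rw [Fin.top_eq_last, ← mulVec_last x]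
    exact (hy _).2
  · rintro ⟨hx, hxs, hpoly⟩
    have hys := (strictMono_mulVec_iff (hx 0).1).2 ⟨hxs, hpoly⟩
    refine ⟨hys.monotone.forall_mem_Icc_iff.2 ⟨?_, ?_⟩, hys⟩
    · rw [_root_.bot_eq_zero, mulVec_zero]
      exact mul_nonneg hcoeff.le (hx 0).1
    · rw [Fin.top_eq_last, mulVec_last]
      exact (hx _).2

end gapMatrix

theorem setOf_noPolygon_eq_preimage (m : ℕ) :
    {x : Fin (m + 3) → ℝ | (∀ i, x i ∈ Set.Icc (0 : ℝ) 1) ∧ StrictMono x ∧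
        NoPolygon (m + 3) (m + 2) x} =
      Matrix.toLin' (gapMatrix m) ⁻¹'
        ({y | ∀ i, y i ∈ Set.Icc (0 : ℝ) 1} ∩ {y | StrictMono y}) := by
  ext x
  exact (gapMatrix.mulVec_mem_iff x).symm

theorem measurableSet_setOf_noPolygon (m : ℕ) :
    MeasurableSet {x : Fin (m + 3) → ℝ | (∀ i, x i ∈ Set.Icc (0 : ℝ) 1) ∧ StrictMono x ∧
      NoPolygon (m + 3) (m + 2) x} := by
  rw [setOf_noPolygon_eq_preimage]
  exact (measurableSet_setOf_forall_mem_inter_strictMono measurableSet_Icc).preimage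
    (LinearMap.continuous_of_finiteDimensional (Matrix.toLin' (gapMatrix m))).measurable

theorem volume_setOf_noPolygon (m : ℕ) :
    volume {x : Fin (m + 3) → ℝ | (∀ i, x i ∈ Set.Icc (0 : ℝ) 1) ∧ StrictMono x ∧
        NoPolygon (m + 3) (m + 2) x} =
      (((2 * m + 1) * 2 ^ m * m.factorial : ℕ) : ℝ≥0∞)⁻¹ *
        volume ({x : Fin (m + 3) → ℝ | ∀ i, x i ∈ Set.Icc (0 : ℝ) 1} ∩ {x | StrictMono x}) := by
  have hdet : LinearMap.det (Matrix.toLin' (gapMatrix m)) =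
      ((2 * m + 1) * 2 ^ m * m.factorial : ℕ) := by
    rw [LinearMap.det_toLin', gapMatrix.det]
    push_cast
    ring
  have hpos : (0 : ℝ) < ((2 * m + 1) * 2 ^ m * m.factorial : ℕ) := by positivity
  rw [setOf_noPolygon_eq_preimage, Measure.addHaar_preimage_linearMap _ (hdet ▸ hpos.ne'), hdet,
    abs_of_pos (inv_pos.2 hpos), ENNReal.ofReal_inv_of_pos hpos, ENNReal.ofReal_natCast]

/-- For `n ≥ 4`, the probability that no `(n-1)`-gon can be formed from the `n` sticks
(both windows of `n-1` consecutive order statistics fail the polygon inequality)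
equals `1 / ((2n-5) · 2^(n-3) · (n-3)!)`. -/
theorem pickup_sticks_no_nsub1gon_prob (n : ℕ) (hn : 4 ≤ n) :
    volume {x : Fin n → ℝ | (∀ i, x i ∈ Set.Icc (0 : ℝ) 1) ∧
        NoPolygon n (n - 1) (x ∘ Tuple.sort x)} =
      1 / (((2 * n - 5) * 2 ^ (n - 3) * (n - 3).factorial : ℕ) : ℝ≥0∞) := by
  obtain ⟨m, rfl⟩ : ∃ m, n = m + 3 := ⟨n - 3, by omega⟩
  rw [show m + 3 - 1 = m + 2 from rfl, show 2 * (m + 3) - 5 = 2 * m + 1 by omega,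
    Nat.add_sub_cancel,
    volume_eq_factorial_mul_volume_inter_strictMono
      (comp_perm_preimage_setOf_sort _ (NoPolygon (m + 3) (m + 2)))
      (setOf_sort_inter_strictMono (Set.Icc (0 : ℝ) 1) (NoPolygon (m + 3) (m + 2)) ▸
        measurableSet_setOf_noPolygon m),
    setOf_sort_inter_strictMono, volume_setOf_noPolygon, mul_left_comm,
    ← volume_eq_factorial_mul_volume_inter_strictMono (comp_perm_preimage_setOf_forall_mem _)
      (measurableSet_setOf_forall_mem_inter_strictMono measurableSet_Icc),
    volume_setOf_forall_mem_Icc_zero_one, mul_one, one_div]
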